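/- Let α > 1 and a, h > 0, and set o := ( (2h/π)·log(1+√2) + a )^{−α}. For x ∈ (0, o), put u := (π/(2h))·( x^{−1/α} − a ) and t := ( sinh u − 1 ) / ( sinh u + 1 ). Then 0 < t < 1 and (1/2)·log( (1+t)/(1−t) ) ≤ (π/(4h))·x^{−1/α}. -/

import Mathlib

/-- The base point `o_{α,a,h} = ((2h/π)·log(1+√2) + a)^{−α}` of display (6.3) of the paper. -/
noncomputable def basePt (α a h : ℝ) : ℝ :=
  ((2 * h / Real.pi) * Real.log (1 + Real.sqrt 2) + a) ^ (-α)

lemma sinh_log_one_add_sqrt_two : Real.sinh (Real.log (1 + Real.sqrt 2)) = 1 := by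
  have h2 : (0:ℝ) < Real.sqrt 2 := Real.sqrt_pos.2 (by norm_num)
  have hpos : (0:ℝ) < 1 + Real.sqrt 2 := by linarith
  have hsq : Real.sqrt 2 * Real.sqrt 2 = 2 := Real.mul_self_sqrt (by norm_num)
  rw [Real.sinh_eq, Real.exp_neg, Real.exp_log hpos]
  field_simp
  nlinarith [hsq]

/-- conclusion (3) of Proposition 6.1 of the paper, in the unit-disc model.
For `α > 1`, `a, h > 0` and `x ∈ (0, o)` where `o = ((2h/π)·log(1+√2) + a)^{−α}`, put
`u = (π/(2h))·(x^{−1/α} − a)` and `t = (sinh u − 1)/(sinh u + 1)`. Then `0 < t < 1` and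
`(1/2)·log((1+t)/(1−t)) ≤ (π/(4h))·x^{−1/α}`. -/
theorem poincare_distance_bound (α a h x : ℝ) (hα : 1 < α) (ha : 0 < a) (hh : 0 < h)
    (hx : 0 < x) (hxo : x < basePt α a h) :
    0 < (Real.sinh ((Real.pi / (2 * h)) * (x ^ (-1 / α) - a)) - 1) /
        (Real.sinh ((Real.pi / (2 * h)) * (x ^ (-1 / α) - a)) + 1) ∧
    (Real.sinh ((Real.pi / (2 * h)) * (x ^ (-1 / α) - a)) - 1) /
        (Real.sinh ((Real.pi / (2 * h)) * (x ^ (-1 / α) - a)) + 1) < 1 ∧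
    (1 / 2) * Real.log
        ((1 + (Real.sinh ((Real.pi / (2 * h)) * (x ^ (-1 / α) - a)) - 1) /
            (Real.sinh ((Real.pi / (2 * h)) * (x ^ (-1 / α) - a)) + 1)) /
          (1 - (Real.sinh ((Real.pi / (2 * h)) * (x ^ (-1 / α) - a)) - 1) /
            (Real.sinh ((Real.pi / (2 * h)) * (x ^ (-1 / α) - a)) + 1)))
      ≤ (Real.pi / (4 * h)) * x ^ (-1 / α) := by
  have hπ : (0:ℝ) < Real.pi := Real.pi_pos
  set c : ℝ := (2 * h / Real.pi) * Real.log (1 + Real.sqrt 2) + a with hc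
  have hlog2 : 0 < Real.log (1 + Real.sqrt 2) := by
    apply Real.log_pos
    have : (0:ℝ) < Real.sqrt 2 := Real.sqrt_pos.2 (by norm_num)
    linarith
  have hA : 0 < (2 * h / Real.pi) * Real.log (1 + Real.sqrt 2) :=
    mul_pos (by positivity) hlog2
  have hcpos : 0 < c := hc ▸ add_pos hA ha
  have hα0 : (0:ℝ) < α := by linarith
  set s : ℝ := x ^ (-1 / α) with hs
  have hX : (0:ℝ) < x ^ (1 / α) := Real.rpow_pos_of_pos hx _
  have hsc : c < s := by
    have h1 : x ^ (1 / α) < (c ^ (-α)) ^ (1 / α) :=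
      Real.rpow_lt_rpow (le_of_lt hx) hxo (by positivity)
    have h2 : (c ^ (-α)) ^ (1 / α) = c⁻¹ := by
      rw [← Real.rpow_mul hcpos.le, show -α * (1 / α) = -1 by field_simp,
        Real.rpow_neg_one]
    rw [h2] at h1
    have h3 : s = (x ^ (1 / α))⁻¹ := by
      rw [hs, neg_div, Real.rpow_neg hx.le]
    have h5 : c * x ^ (1 / α) < 1 := by
      have := mul_lt_mul_of_pos_left h1 hcpos
      rwa [mul_inv_cancel₀ (ne_of_gt hcpos)] at this
    rw [h3]
    nlinarith [mul_inv_cancel₀ (ne_of_gt hX), inv_pos.2 hX]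
  have hu : Real.log (1 + Real.sqrt 2) < Real.pi / (2 * h) * (s - a) := by
    have h6 : (2 * h / Real.pi) * Real.log (1 + Real.sqrt 2) < s - a := by
      rw [hc] at hsc; linarith
    have h7 := mul_lt_mul_of_pos_left h6 (show 0 < Real.pi / (2 * h) by positivity)
    have h8 : Real.pi / (2 * h) * ((2 * h / Real.pi) * Real.log (1 + Real.sqrt 2))
        = Real.log (1 + Real.sqrt 2) := by
      field_simp
    rwa [h8] at h7
  set S : ℝ := Real.sinh (Real.pi / (2 * h) * (s - a)) with hSdef
  have hS : 1 < S := by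
    have h9 := Real.sinh_lt_sinh.mpr hu
    rwa [sinh_log_one_add_sqrt_two] at h9
  refine ⟨div_pos (by linarith) (by linarith), ?_, ?_⟩
  · rw [div_lt_one (by linarith)]; linarith
  · have h7 : S + 1 ≠ 0 := by positivity
    have hkey : (1 + (S - 1) / (S + 1)) / (1 - (S - 1) / (S + 1)) = S := by
      rw [div_eq_iff]
      · field_simp
        ring
      · intro habs
        have : (1 - (S - 1) / (S + 1)) * (S + 1) = 0 := by rw [habs]; ring
        have h9 : (1 - (S - 1) / (S + 1)) * (S + 1) = 2 := by field_simp; norm_num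
        linarith [h9 ▸ this]
    rw [hkey]
    have hSle : S ≤ Real.exp (Real.pi / (2 * h) * (s - a)) := by
      rw [hSdef, Real.sinh_eq]
      have := Real.exp_pos (-(Real.pi / (2 * h) * (s - a)))
      have := (Real.exp_pos (Real.pi / (2 * h) * (s - a))).le
      linarith
    have hlogS : Real.log S ≤ Real.pi / (2 * h) * (s - a) := by
      calc Real.log S ≤ Real.log (Real.exp (Real.pi / (2 * h) * (s - a))) :=
            Real.log_le_log (by linarith) hSle
        _ = _ := Real.log_exp _
    have heq : (1 / 2 : ℝ) * (Real.pi / (2 * h) * (s - a))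
        = Real.pi / (4 * h) * (s - a) := by ring
    have hpa : 0 < Real.pi / (4 * h) * a := by positivity
    have hfin : Real.pi / (4 * h) * (s - a) ≤ Real.pi / (4 * h) * s := by
      have : Real.pi / (4 * h) * (s - a)
          = Real.pi / (4 * h) * s - Real.pi / (4 * h) * a := by ring
      linarith
    have : (1 / 2 : ℝ) * Real.log S ≤ Real.pi / (4 * h) * (s - a) := by
      rw [← heq]; linarith
    calc (1 / 2 : ℝ) * Real.log S ≤ Real.pi / (4 * h) * (s - a) := this
      _ ≤ Real.pi / (4 * h) * s := hfin
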